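/- Let R(x) = e^{−f(x)} be a probability density on ℝ^d with f 1-strongly convex, L-smooth, and global minimum at 0. Then for all α ≥ 1, the α-Rényi divergence satisfies D_α(N(0, (1/L)I_d) ‖ R) ≤ (d/2) ln L. -/

import Mathlib

open MeasureTheory Real

/-- The α-Rényi divergence between two probability densities on `ℝ^d`. -/
noncomputable def renyiDiv {d : ℕ} (α : ℝ) (μ ν : EuclideanSpace ℝ (Fin d) → ℝ) : ℝ :=
  (α - 1)⁻¹ * Real.log (∫ x, μ x ^ α * ν x ^ (1 - α))

/-- Density of the isotropic Gaussian `N(m, σ²I_d)` on `ℝ^d`. -/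
noncomputable def gaussDensity {d : ℕ} (σ2 : ℝ) (m : EuclideanSpace ℝ (Fin d)) :
    EuclideanSpace ℝ (Fin d) → ℝ :=
  fun x => (2 * π * σ2) ^ (-(d : ℝ) / 2) * Real.exp (-‖x - m‖ ^ 2 / (2 * σ2))

/-! Along each ray from the minimiser `0`, the Hessian bounds give the quadratic sandwich
`f 0 + ‖x‖²/2 ≤ f x ≤ f 0 + L‖x‖²/2`. The upper half says `e^{-f} ≥ c · N(0, L⁻¹I)` with
`c = e^{-f 0} (2π/L)^{d/2}`, and a pointwise bound `ν ≥ c μ` between probability densities gives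
`D_α(μ ‖ ν) ≤ -log c` for every `α ≥ 1`. The lower half and `∫ e^{-f} = 1` give
`f 0 ≤ (d/2) log 2π`, hence `-log c ≤ (d/2) log L`. -/

theorem add_deriv_add_half_le_of_le_deriv2 {g g' g'' : ℝ → ℝ} {m : ℝ}
    (hg : ∀ t, HasDerivAt g (g' t) t) (hg' : ∀ t, HasDerivAt g' (g'' t) t)
    (hm : ∀ t, m ≤ g'' t) : g 0 + g' 0 + m / 2 ≤ g 1 := by
  have hslope : Monotone fun t => g' t - m * t :=
    monotone_of_hasDerivAt_nonneg
      (fun t => ((hg' t).sub ((hasDerivAt_id' t).const_mul m)).congr_deriv (by ring))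
      fun t => sub_nonneg.2 (hm t)
  have hgap : MonotoneOn (fun t => g t - g' 0 * t - m / 2 * t ^ 2) (Set.Ici 0) := by
    have hderiv (t : ℝ) : HasDerivAt (fun t => g t - g' 0 * t - m / 2 * t ^ 2)
        (g' t - g' 0 - m * t) t :=
      (((hg t).sub ((hasDerivAt_id' t).const_mul _)).sub
        ((hasDerivAt_pow 2 t).const_mul _)).congr_deriv (by ring)
    refine monotoneOn_of_hasDerivWithinAt_nonneg (convex_Ici 0)
      (fun t _ => (hderiv t).continuousAt.continuousWithinAt)
      (fun t _ => (hderiv t).hasDerivWithinAt) fun t ht => ?_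
    have := hslope (interior_subset ht : (0:ℝ) ≤ t)
    simp only [mul_zero, sub_zero] at this
    linarith
  have := hgap Set.self_mem_Ici (Set.mem_Ici.2 zero_le_one) zero_le_one
  simp only at this
  linarith

theorem le_of_forall_mul_sq_norm_le {F : Type*} [NormedAddCommGroup F] [Nontrivial F] {m M : ℝ}
    (h : ∀ v : F, m * ‖v‖ ^ 2 ≤ M * ‖v‖ ^ 2) : m ≤ M := by
  obtain ⟨v, hv⟩ := exists_ne (0 : F)
  exact le_of_mul_le_mul_right (h v) (by positivity)

section Hessian

variable {E : Type*} [NormedAddCommGroup E] [InnerProductSpace ℝ E] [CompleteSpace E]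
  {f : E → ℝ}

theorem ContDiff.differentiable_gradient {n : WithTop ℕ∞} (hf : ContDiff ℝ n f) (hn : 2 ≤ n) :
    Differentiable ℝ (gradient f) :=
  ((InnerProductSpace.toDual ℝ E).symm.contDiff.comp
    (hf.fderiv_right (m := 1) (by simpa [one_add_one_eq_two] using hn))).differentiable one_ne_zero

theorem hasDerivAt_comp_add_smul (hf : Differentiable ℝ f) (x v : E) (t : ℝ) :
    HasDerivAt (fun t : ℝ => f (x + t • v)) (inner ℝ (gradient f (x + t • v)) v) t := by
  have hline : HasDerivAt (fun t : ℝ => x + t • v) v t := by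
    simpa using ((hasDerivAt_id t).smul_const v).const_add x
  have h := (hf (x + t • v)).hasFDerivAt.comp_hasDerivAt t hline
  rwa [(hf _).hasGradientAt.fderiv_apply] at h

theorem hasDerivAt_inner_gradient_comp_add_smul (hg : Differentiable ℝ (gradient f)) (x v : E)
    (t : ℝ) :
    HasDerivAt (fun t : ℝ => inner ℝ (gradient f (x + t • v)) v)
      (inner ℝ (fderiv ℝ (gradient f) (x + t • v) v) v) t := by
  have hline : HasDerivAt (fun t : ℝ => x + t • v) v t := by
    simpa using ((hasDerivAt_id t).smul_const v).const_add x
  have h := ((hg (x + t • v)).hasFDerivAt.comp_hasDerivAt t hline).inner ℝ (hasDerivAt_const t v)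
  rwa [inner_zero_right, zero_add] at h

theorem add_inner_gradient_add_le_of_le_hessian (hf : Differentiable ℝ f)
    (hg : Differentiable ℝ (gradient f)) {m : ℝ}
    (hm : ∀ y w, m * ‖w‖ ^ 2 ≤ inner ℝ (fderiv ℝ (gradient f) y w) w) (x v : E) :
    f x + inner ℝ (gradient f x) v + m / 2 * ‖v‖ ^ 2 ≤ f (x + v) := by
  have := add_deriv_add_half_le_of_le_deriv2 (hasDerivAt_comp_add_smul hf x v)
    (hasDerivAt_inner_gradient_comp_add_smul hg x v) fun t => hm (x + t • v) v
  simp only [zero_smul, add_zero, one_smul] at this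
  linarith

theorem le_add_inner_gradient_add_of_hessian_le (hf : Differentiable ℝ f)
    (hg : Differentiable ℝ (gradient f)) {M : ℝ}
    (hM : ∀ y w, inner ℝ (fderiv ℝ (gradient f) y w) w ≤ M * ‖w‖ ^ 2) (x v : E) :
    f (x + v) ≤ f x + inner ℝ (gradient f x) v + M / 2 * ‖v‖ ^ 2 := by
  have := add_deriv_add_half_le_of_le_deriv2 (fun t => (hasDerivAt_comp_add_smul hf x v t).neg)
    (fun t => (hasDerivAt_inner_gradient_comp_add_smul hg x v t).neg)
    fun t => neg_le_neg (hM (x + t • v) v)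
  simp only [Pi.neg_apply, zero_smul, add_zero, one_smul] at this
  linarith

end Hessian

section Gaussian

variable {V : Type*} [NormedAddCommGroup V] [InnerProductSpace ℝ V] [FiniteDimensional ℝ V]
  [MeasurableSpace V] [BorelSpace V]

theorem integrable_rexp_neg_mul_sq_norm {b : ℝ} (hb : 0 < b) :
    Integrable fun v : V => rexp (-b * ‖v‖ ^ 2) :=
  .of_integral_ne_zero <| by
    rw [GaussianFourier.integral_rexp_neg_mul_sq_norm hb]
    positivity

theorem integral_exp_neg_le_of_add_mul_sq_norm_le {g : V → ℝ} {a b : ℝ} (hb : 0 < b)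
    (hg : ∀ v, a + b * ‖v‖ ^ 2 ≤ g v) :
    ∫ v, rexp (-g v) ≤ rexp (-a) * (π / b) ^ (Module.finrank ℝ V / 2 : ℝ) := by
  rw [← GaussianFourier.integral_rexp_neg_mul_sq_norm hb, ← integral_const_mul]
  refine integral_mono_of_nonneg (.of_forall fun v => (Real.exp_pos _).le)
    ((integrable_rexp_neg_mul_sq_norm hb).const_mul _) (.of_forall fun v => ?_)
  dsimp only
  rw [← Real.exp_add]
  exact Real.exp_le_exp.2 (by linarith [hg v])

theorem le_half_finrank_mul_log_of_integral_exp_neg_eq_one {g : V → ℝ} {a b : ℝ} (hb : 0 < b)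
    (hg : ∀ v, a + b * ‖v‖ ^ 2 ≤ g v) (h1 : ∫ v, rexp (-g v) = 1) :
    a ≤ Module.finrank ℝ V / 2 * Real.log (π / b) := by
  have h := integral_exp_neg_le_of_add_mul_sq_norm_le hb hg
  rw [h1] at h
  have := Real.log_le_log one_pos h
  rw [Real.log_one, Real.log_mul (by positivity) (by positivity), Real.log_exp,
    Real.log_rpow (by positivity)] at this
  linarith

end Gaussian

section GaussDensity

variable {d : ℕ} {σ2 : ℝ}

theorem rpow_mul_gaussDensity (hσ : 0 < σ2) (m x : EuclideanSpace ℝ (Fin d)) :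
    (2 * π * σ2) ^ (d / 2 : ℝ) * gaussDensity σ2 m x = rexp (-‖x - m‖ ^ 2 / (2 * σ2)) := by
  rw [gaussDensity, ← mul_assoc, ← Real.rpow_add (by positivity), neg_div, add_neg_cancel,
    Real.rpow_zero, one_mul]

theorem gaussDensity_pos (hσ : 0 < σ2) (m x : EuclideanSpace ℝ (Fin d)) :
    0 < gaussDensity σ2 m x := by
  unfold gaussDensity
  positivity

theorem integral_gaussDensity (hσ : 0 < σ2) (m : EuclideanSpace ℝ (Fin d)) :
    ∫ x, gaussDensity σ2 m x = 1 := by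
  have hb : 0 < (2 * σ2)⁻¹ := by positivity
  have key := GaussianFourier.integral_rexp_neg_mul_sq_norm (V := EuclideanSpace ℝ (Fin d)) hb
  rw [finrank_euclideanSpace_fin, div_inv_eq_mul, mul_left_comm, ← mul_assoc] at key
  simp only [gaussDensity, integral_const_mul]
  rw [integral_sub_right_eq_self (fun x => rexp (-‖x‖ ^ 2 / (2 * σ2))) m]
  simp only [neg_div, div_eq_inv_mul (‖_‖ ^ 2), ← neg_mul]
  rw [key, ← Real.rpow_add (by positivity), neg_add_cancel, Real.rpow_zero]

theorem exp_neg_mul_rpow_mul_gaussDensity_le (hσ : 0 < σ2) {g : EuclideanSpace ℝ (Fin d) → ℝ}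
    {a : ℝ} {m : EuclideanSpace ℝ (Fin d)} (hg : ∀ x, g x ≤ a + ‖x - m‖ ^ 2 / (2 * σ2))
    (x : EuclideanSpace ℝ (Fin d)) :
    rexp (-a) * (2 * π * σ2) ^ (d / 2 : ℝ) * gaussDensity σ2 m x ≤ rexp (-g x) := by
  rw [mul_assoc, rpow_mul_gaussDensity hσ, ← Real.exp_add, Real.exp_le_exp, neg_div]
  linarith [hg x]

theorem integrable_gaussDensity (hσ : 0 < σ2) (m : EuclideanSpace ℝ (Fin d)) :
    Integrable (gaussDensity σ2 m) :=
  .of_integral_ne_zero <| by rw [integral_gaussDensity hσ]; exact one_ne_zero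

end GaussDensity

theorem integral_rpow_mul_rpow_le_of_const_mul_le {X : Type*} [MeasurableSpace X]
    {ρ : Measure X} {μ ν : X → ℝ} {α c : ℝ} (hα : 1 ≤ α) (hc : 0 < c) (hμ : ∀ x, 0 < μ x)
    (hμint : Integrable μ ρ) (hμ1 : ∫ x, μ x ∂ρ = 1) (hle : ∀ x, c * μ x ≤ ν x) :
    ∫ x, μ x ^ α * ν x ^ (1 - α) ∂ρ ≤ c ^ (1 - α) := by
  have hpt (x : X) : μ x ^ α * ν x ^ (1 - α) ≤ c ^ (1 - α) * μ x := calc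
    μ x ^ α * ν x ^ (1 - α) ≤ μ x ^ α * (c * μ x) ^ (1 - α) :=
      mul_le_mul_of_nonneg_left
        (Real.rpow_le_rpow_of_nonpos (mul_pos hc (hμ x)) (hle x) (by linarith))
        (Real.rpow_nonneg (hμ x).le α)
    _ = c ^ (1 - α) * μ x := by
      rw [Real.mul_rpow hc.le (hμ x).le, mul_left_comm, ← Real.rpow_add (hμ x),
        add_sub_cancel, Real.rpow_one]
  have hν (x : X) : 0 < ν x := (mul_pos hc (hμ x)).trans_le (hle x)
  calc ∫ x, μ x ^ α * ν x ^ (1 - α) ∂ρ ≤ ∫ x, c ^ (1 - α) * μ x ∂ρ :=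
        integral_mono_of_nonneg
          (.of_forall fun x => mul_nonneg (Real.rpow_nonneg (hμ x).le _)
            (Real.rpow_nonneg (hν x).le _))
          (hμint.const_mul _) (.of_forall hpt)
    _ = c ^ (1 - α) := by rw [integral_const_mul, hμ1, mul_one]

theorem renyiDiv_le_neg_log_of_const_mul_le {d : ℕ} {μ ν : EuclideanSpace ℝ (Fin d) → ℝ}
    {α c : ℝ} (hα : 1 ≤ α) (hc : 0 < c) (hμ : ∀ x, 0 < μ x) (hμint : Integrable μ)
    (hμ1 : ∫ x, μ x = 1) (hνint : Integrable ν) (hν1 : ∫ x, ν x = 1)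
    (hle : ∀ x, c * μ x ≤ ν x) :
    renyiDiv α μ ν ≤ -Real.log c := by
  have hc1 : c ≤ 1 := by
    simpa only [integral_const_mul, hμ1, hν1, mul_one] using
      integral_mono (hμint.const_mul c) hνint hle
  have hlogc : Real.log c ≤ 0 := Real.log_nonpos hc.le hc1
  rcases hα.eq_or_lt with rfl | hα1
  · simpa [renyiDiv] using hlogc
  have hI := integral_rpow_mul_rpow_le_of_const_mul_le hα hc hμ hμint hμ1 hle
  have hlog : Real.log (∫ x, μ x ^ α * ν x ^ (1 - α)) ≤ (1 - α) * Real.log c := by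
    have hν (x) : 0 ≤ ν x := (mul_pos hc (hμ x)).le.trans (hle x)
    rcases (integral_nonneg (f := fun x => μ x ^ α * ν x ^ (1 - α)) fun x =>
      mul_nonneg (Real.rpow_nonneg (hμ x).le α) (Real.rpow_nonneg (hν x) _)).eq_or_lt
      with h0 | hpos
    · rw [← h0, Real.log_zero]
      nlinarith
    · rw [← Real.log_rpow hc]
      exact Real.log_le_log hpos hI
  calc renyiDiv α μ ν ≤ (α - 1)⁻¹ * ((1 - α) * Real.log c) :=
        mul_le_mul_of_nonneg_left hlog (inv_nonneg.2 (by linarith))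
    _ = -Real.log c := by field_simp [(sub_pos.2 hα1).ne']; ring

/-- If `R = e^{-f}` is a probability density with `f` 1-strongly convex, `L`-smooth
(`I ⪯ ∇²f ⪯ LI`), with global minimum at `0`, then for all `α ≥ 1`,
`D_α(N(0, (1/L)I_d) ‖ R) ≤ (d/2) ln L`. -/
theorem renyiDiv_gaussian_init_le {d : ℕ} (L : ℝ) (f : EuclideanSpace ℝ (Fin d) → ℝ)
    (hf : ContDiff ℝ 2 f)
    (hconv : ∀ x v : EuclideanSpace ℝ (Fin d),
      ‖v‖ ^ 2 ≤ (inner ℝ (fderiv ℝ (gradient f) x v) v : ℝ))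
    (hsmooth : ∀ x v : EuclideanSpace ℝ (Fin d),
      (inner ℝ (fderiv ℝ (gradient f) x v) v : ℝ) ≤ L * ‖v‖ ^ 2)
    (hmin : gradient f 0 = 0)
    (hprob : ∫ x, Real.exp (-f x) = 1)
    (α : ℝ) (hα : 1 ≤ α) :
    renyiDiv α (gaussDensity (1 / L) (0 : EuclideanSpace ℝ (Fin d)))
        (fun x => Real.exp (-f x)) ≤ (d : ℝ) / 2 * Real.log L := by
  rcases Nat.eq_zero_or_pos d with rfl | hd
  · have hf0 : rexp (-f 0) = 1 := by simpa [volume_euclideanSpace_eq_dirac] using hprob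
    simp [renyiDiv, volume_euclideanSpace_eq_dirac, gaussDensity, hf0]
  have : Nonempty (Fin d) := ⟨⟨0, hd⟩⟩
  have hL : 1 ≤ L :=
    le_of_forall_mul_sq_norm_le fun v => by simpa using (hconv 0 v).trans (hsmooth 0 v)
  have hσ : 0 < 1 / L := by positivity
  have hdiff : Differentiable ℝ f := hf.differentiable (by norm_num)
  have hgrad := hf.differentiable_gradient le_rfl
  have hlower (x : EuclideanSpace ℝ (Fin d)) : f 0 + 1 / 2 * ‖x‖ ^ 2 ≤ f x := by
    simpa [hmin] using add_inner_gradient_add_le_of_le_hessian hdiff hgrad (m := 1)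
      (by simpa using hconv) 0 x
  have hupper (x : EuclideanSpace ℝ (Fin d)) : f x ≤ f 0 + ‖x - 0‖ ^ 2 / (2 * (1 / L)) := by
    convert le_add_inner_gradient_add_of_hessian_le hdiff hgrad hsmooth 0 x using 1
    · simp
    · simp [hmin]
      field_simp
  have hf0 : f 0 ≤ d / 2 * Real.log (2 * π) := by
    simpa [div_div_eq_mul_div, mul_comm π] using
      le_half_finrank_mul_log_of_integral_exp_neg_eq_one one_half_pos hlower hprob
  calc renyiDiv α (gaussDensity (1 / L) 0) (fun x => rexp (-f x))
      ≤ -Real.log (rexp (-f 0) * (2 * π * (1 / L)) ^ (d / 2 : ℝ)) :=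
        renyiDiv_le_neg_log_of_const_mul_le hα (by positivity) (gaussDensity_pos hσ 0)
          (integrable_gaussDensity hσ 0) (integral_gaussDensity hσ 0)
          (.of_integral_ne_zero (by simp [hprob])) hprob
          (exp_neg_mul_rpow_mul_gaussDensity_le hσ hupper)
    _ = f 0 - d / 2 * (Real.log (2 * π) - Real.log L) := by
      rw [Real.log_mul (by positivity) (by positivity), Real.log_exp,
        Real.log_rpow (by positivity), mul_one_div, Real.log_div (by positivity) (by positivity)]
      ring
    _ ≤ d / 2 * Real.log L := by linarith
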